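/- (Injectivity of the interval encoding on prefix-incomparable sequences.) If s and s' are finite sequences over V such that neither is a prefix of the other, then their intervals are disjoint: I_s ∩ I_{s'} = ∅. Consequently any real number z lies in the interval of at most one sequence of any given length. -/

import Mathlib

open Finset

/-- Cumulative probability `C_t(x) = ∑_{u : σ u < σ t} P(u | x)`. -/
noncomputable def cdf {V : Type*} [Fintype V] (P : List V → V → ℝ) (σ : V → ℕ)
    (x : List V) (t : V) : ℝ :=
  ∑ u ∈ Finset.univ.filter (fun u => σ u < σ t), P x u

/-- Endpoints of the interval `I_{x ++ s}`, given that `I_x = [ab.1, ab.2)`: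
starting from prefix `x` with interval endpoints `ab`, process the tokens of `s`
one by one, replacing the current interval `[a, b)` by the child interval
`[a + (b-a)·C_t(x), a + (b-a)·(C_t(x) + P(t|x)))`. -/
noncomputable def endsAux {V : Type*} [Fintype V] (P : List V → V → ℝ) (σ : V → ℕ) :
    List V → List V → ℝ × ℝ → ℝ × ℝ
  | _, [], ab => ab
  | x, t :: r, ab =>
      endsAux P σ (x ++ [t]) r
        (ab.1 + (ab.2 - ab.1) * cdf P σ x t,
         ab.1 + (ab.2 - ab.1) * (cdf P σ x t + P x t))

/-- Endpoints of the interval `I_s` (starting from `I_{[]} = [0,1)`). -/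
noncomputable def ends {V : Type*} [Fintype V] (P : List V → V → ℝ) (σ : V → ℕ)
    (s : List V) : ℝ × ℝ :=
  endsAux P σ [] s ((0 : ℝ), (1 : ℝ))

/-- The half-open interval `I_s ⊆ ℝ`. -/
noncomputable def interval {V : Type*} [Fintype V] (P : List V → V → ℝ) (σ : V → ℕ)
    (s : List V) : Set ℝ :=
  Set.Ico (ends P σ s).1 (ends P σ s).2

/-!
Each child interval `I_{x ++ [t]}` lies inside `I_x`, and distinct children of the same `x`
are disjoint because `C_t(x) + P(t | x) ≤ C_{t'}(x)` whenever `σ t < σ t'`; so intervals shrink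
along prefixes. Two prefix-incomparable sequences first differ after a common prefix `x`, hence
their intervals sit inside two distinct, disjoint children of `I_x`.
-/

theorem exists_append_cons_of_not_prefix {V : Type*} :
    ∀ s s' : List V, ¬ s <+: s' → ¬ s' <+: s →
      ∃ (x : List V) (t t' : V) (r r' : List V),
        t ≠ t' ∧ s = x ++ t :: r ∧ s' = x ++ t' :: r'
  | [], _, h, _ | _, [], _, h => absurd List.nil_prefix h
  | a :: s, b :: s', h, h' => by
    by_cases hab : a = b
    · subst hab
      obtain ⟨x, t, t', r, r', hne, rfl, rfl⟩ := exists_append_cons_of_not_prefix s s'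
        (fun hp => h (List.prefix_cons_inj a |>.mpr hp))
        (fun hp => h' (List.prefix_cons_inj a |>.mpr hp))
      exact ⟨a :: x, t, t', r, r', hne, rfl, rfl⟩
    · exact ⟨[], a, b, s, s', hab, rfl, rfl⟩

section IntervalEncoding

variable {V : Type*} [Fintype V] {P : List V → V → ℝ} {σ : V → ℕ}

theorem cdf_nonneg (hP0 : ∀ x t, 0 ≤ P x t) (x : List V) (t : V) : 0 ≤ cdf P σ x t :=
  Finset.sum_nonneg fun u _ => hP0 x u

theorem cdf_add_eq_sum_insert [DecidableEq V] (x : List V) (t : V) :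
    cdf P σ x t + P x t = ∑ u ∈ insert t (univ.filter fun u => σ u < σ t), P x u := by
  rw [sum_insert (by simp), cdf, add_comm]

theorem cdf_add_le_one (hP0 : ∀ x t, 0 ≤ P x t) (hPsum : ∀ x : List V, ∑ t, P x t ≤ 1)
    (x : List V) (t : V) : cdf P σ x t + P x t ≤ 1 := by
  classical
  rw [cdf_add_eq_sum_insert]
  exact (sum_le_sum_of_subset_of_nonneg (subset_univ _) fun u _ _ => hP0 x u).trans (hPsum x)

theorem cdf_add_le_cdf_of_lt (hP0 : ∀ x t, 0 ≤ P x t) (x : List V) {t t' : V}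
    (h : σ t < σ t') : cdf P σ x t + P x t ≤ cdf P σ x t' := by
  classical
  rw [cdf_add_eq_sum_insert]
  refine sum_le_sum_of_subset_of_nonneg (fun u hu => ?_) fun u _ _ => hP0 x u
  simp only [mem_insert, mem_filter, mem_univ, true_and] at hu ⊢
  rcases hu with rfl | hu
  exacts [h, hu.trans h]

theorem endsAux_append (x s₁ s₂ : List V) (ab : ℝ × ℝ) :
    endsAux P σ x (s₁ ++ s₂) ab = endsAux P σ (x ++ s₁) s₂ (endsAux P σ x s₁ ab) := by
  induction s₁ generalizing x ab with
  | nil => simp [endsAux]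
  | cons t r ih => simp [endsAux, ih]

theorem ends_concat (x : List V) (t : V) :
    ends P σ (x ++ [t]) =
      ((ends P σ x).1 + ((ends P σ x).2 - (ends P σ x).1) * cdf P σ x t,
       (ends P σ x).1 + ((ends P σ x).2 - (ends P σ x).1) * (cdf P σ x t + P x t)) := by
  rw [ends, endsAux_append, List.nil_append]
  rfl

theorem ends_fst_le_snd (hP0 : ∀ x t, 0 ≤ P x t) (s : List V) :
    (ends P σ s).1 ≤ (ends P σ s).2 := by
  induction s using List.reverseRecOn with
  | nil => simp [ends, endsAux]
  | append_singleton x t ih =>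
    rw [ends_concat]
    have := mul_nonneg (sub_nonneg.2 ih) (hP0 x t)
    linarith

theorem interval_concat_subset (hP0 : ∀ x t, 0 ≤ P x t) (hPsum : ∀ x : List V, ∑ t, P x t ≤ 1)
    (x : List V) (t : V) : interval P σ (x ++ [t]) ⊆ interval P σ x := by
  have hab := sub_nonneg.2 (ends_fst_le_snd (σ := σ) hP0 x)
  rw [interval, interval, ends_concat]
  apply Set.Ico_subset_Ico
  · nlinarith [cdf_nonneg (σ := σ) hP0 x t]
  · nlinarith [cdf_add_le_one (σ := σ) hP0 hPsum x t]

theorem interval_subset_of_prefix (hP0 : ∀ x t, 0 ≤ P x t)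
    (hPsum : ∀ x : List V, ∑ t, P x t ≤ 1) {s s' : List V} (h : s <+: s') :
    interval P σ s' ⊆ interval P σ s := by
  obtain ⟨r, rfl⟩ := h
  induction r using List.reverseRecOn with
  | nil => simp
  | append_singleton r t ih =>
    rw [← List.append_assoc]
    exact (interval_concat_subset hP0 hPsum _ t).trans ih

theorem disjoint_interval_concat_of_lt (hP0 : ∀ x t, 0 ≤ P x t) (x : List V) {t t' : V}
    (h : σ t < σ t') : Disjoint (interval P σ (x ++ [t])) (interval P σ (x ++ [t'])) := by
  have hab := sub_nonneg.2 (ends_fst_le_snd (σ := σ) hP0 x)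
  rw [interval, interval, ends_concat, ends_concat]
  refine Set.Ico_disjoint_Ico_same.mono_right (Set.Ico_subset_Ico_left ?_)
  nlinarith [cdf_add_le_cdf_of_lt hP0 x h]

theorem disjoint_interval_concat_of_ne (hP0 : ∀ x t, 0 ≤ P x t) (hσ : Function.Injective σ)
    (x : List V) {t t' : V} (h : t ≠ t') :
    Disjoint (interval P σ (x ++ [t])) (interval P σ (x ++ [t'])) := by
  rcases (hσ.ne h).lt_or_gt with hlt | hlt
  · exact disjoint_interval_concat_of_lt hP0 x hlt
  · exact (disjoint_interval_concat_of_lt hP0 x hlt).symm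

theorem disjoint_interval_of_not_prefix (hP0 : ∀ x t, 0 ≤ P x t)
    (hPsum : ∀ x : List V, ∑ t, P x t ≤ 1) (hσ : Function.Injective σ) {s s' : List V}
    (h : ¬ s <+: s') (h' : ¬ s' <+: s) : Disjoint (interval P σ s) (interval P σ s') := by
  obtain ⟨x, t, t', r, r', hne, rfl, rfl⟩ := exists_append_cons_of_not_prefix s s' h h'
  exact (disjoint_interval_concat_of_ne hP0 hσ x hne).mono
    (interval_subset_of_prefix hP0 hPsum ⟨r, by simp⟩)
    (interval_subset_of_prefix hP0 hPsum ⟨r', by simp⟩)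

end IntervalEncoding

theorem intervals_disjoint_of_not_prefix_general {V : Type*} [Fintype V]
    (P : List V → V → ℝ)
    (hP0 : ∀ (x : List V) (t : V), 0 ≤ P x t)
    (hPsum : ∀ x : List V, ∑ t, P x t ≤ 1)
    (σ : V → ℕ) (hσ : Function.Injective σ) :
    (∀ s s' : List V, ¬ s <+: s' → ¬ s' <+: s →
      interval P σ s ∩ interval P σ s' = ∅) ∧
    (∀ (z : ℝ) (n : ℕ) (s s' : List V), s.length = n → s'.length = n →
      z ∈ interval P σ s → z ∈ interval P σ s' → s = s') := by
  have hdisj : ∀ s s' : List V, ¬ s <+: s' → ¬ s' <+: s →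
      Disjoint (interval P σ s) (interval P σ s') :=
    fun _ _ => disjoint_interval_of_not_prefix hP0 hPsum hσ
  refine ⟨fun s s' h h' => Set.disjoint_iff_inter_eq_empty.1 (hdisj s s' h h'), ?_⟩
  intro z n s s' hs hs' hz hz'
  by_contra hne
  refine Set.disjoint_left.1 (hdisj s s' ?_ ?_) hz hz'
  · exact fun hp => hne (hp.eq_of_length (hs.trans hs'.symm))
  · exact fun hp => hne (hp.eq_of_length (hs'.trans hs.symm)).symm

/-- **Injectivity of the interval encoding on prefix-incomparable
sequences.** If neither of `s`, `s'` is a prefix of the other, then `I_s ∩ I_{s'} = ∅`;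
consequently any real `z` lies in the interval of at most one sequence of any given
length. -/
theorem intervals_disjoint_of_not_prefix {V : Type*} [Fintype V] [Nonempty V]
    (P : List V → V → ℝ)
    (hP0 : ∀ (x : List V) (t : V), 0 ≤ P x t)
    (hPsum : ∀ x : List V, ∑ t, P x t ≤ 1)
    (σ : V → ℕ) (hσ : Function.Injective σ) :
    (∀ s s' : List V, ¬ s <+: s' → ¬ s' <+: s →
      interval P σ s ∩ interval P σ s' = ∅) ∧
    (∀ (z : ℝ) (n : ℕ) (s s' : List V), s.length = n → s'.length = n →
      z ∈ interval P σ s → z ∈ interval P σ s' → s = s') :=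
  intervals_disjoint_of_not_prefix_general P hP0 hPsum σ hσ
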